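/- Let m = 2u+1, n ≥ 1, and H = ℤ[x_1,…,x_m]/R_{2n}. The element c = ∏_{r=1}^u (1-x_r)^{2n-1}(1+x_r)^2 · ∏_{s=u+1}^{m}(1-x_s)^{2n+1} ∈ H equals (1-(x_1+⋯+x_m))^{2n+1} · ∏_{r=1}^u ((1+x_r)/(1-x_r))^2, where (1-x_r)^{-1} = Σ_{k=0}^{2n} x_r^k. -/

import Mathlib

open MvPolynomial

/-- The ideal `R_{2n}(x_1,…,x_m) ⊂ ℤ[x_1,…,x_m]` generated by `x_i x_j` (`i ≠ j`),
`x_i^{2n} - x_j^{2n}` (`i ≠ j`) and `x_j^{2n+1}`; the quotient models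
`H^{even}(m # ℂP^{2n}; ℤ)`. -/
noncomputable def csIdeal (m n : ℕ) : Ideal (MvPolynomial (Fin m) ℤ) :=
  Ideal.span
    ({p | ∃ i j : Fin m, i ≠ j ∧ p = X i * X j} ∪
     {p | ∃ i j : Fin m, i ≠ j ∧ p = X i ^ (2 * n) - X j ^ (2 * n)} ∪
     {p | ∃ j : Fin m, p = X j ^ (2 * n + 1)})

/-!
Since `x_i x_j = 0` for `i ≠ j`, the product `∏_j (1 - x_j)` collapses to `1 - Σ_j x_j`, so
`(1 - Σ_j x_j)^{2n+1} = ∏_j (1 - x_j)^{2n+1}`. Since `x_r^{2n+1} = 0`, the truncated geometric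
series `S_r = Σ_{k ≤ 2n} x_r^k` inverts `1 - x_r`, and factor by factor
`(1 - x_r)^{2n+1} ((1 + x_r) S_r)^2 = (1 - x_r)^{2n-1} (1 + x_r)^2`.
-/

open Finset

theorem Finset.prod_one_sub_of_pairwise_mul_eq_zero {ι R : Type*} [CommRing R]
    {s : Finset ι} {x : ι → R} (h : (s : Set ι).Pairwise fun i j => x i * x j = 0) :
    ∏ i ∈ s, (1 - x i) = 1 - ∑ i ∈ s, x i := by
  classical
  induction s using Finset.cons_induction with
  | empty => simp
  | cons a s ha ih =>
    rw [coe_cons, Set.pairwise_insert] at h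
    have hcross : x a * ∑ i ∈ s, x i = 0 :=
      mul_sum s x (x a) ▸ sum_eq_zero fun i hi => (h.2 i hi (ne_of_mem_of_not_mem hi ha).symm).1
    rw [prod_cons, sum_cons, ih h.1]
    linear_combination hcross

theorem one_sub_mul_geom_sum_of_pow_eq_zero {R : Type*} [Ring R] {a : R} {N : ℕ}
    (h : a ^ N = 0) : (1 - a) * ∑ k ∈ range N, a ^ k = 1 := by
  rw [mul_neg_geom_sum, h, sub_zero]

theorem one_sub_pow_add_two_mul_sq_of_mul_eq_one {R : Type*} [CommRing R] {a S : R}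
    (h : (1 - a) * S = 1) (k : ℕ) :
    (1 - a) ^ (k + 2) * ((1 + a) * S) ^ 2 = (1 - a) ^ k * (1 + a) ^ 2 := by
  linear_combination (1 - a) ^ k * (1 + a) ^ 2 * ((1 - a) * S + 1) * h

namespace csIdeal

variable {m : ℕ} (n : ℕ)

theorem mk_X_mul_mk_X {i j : Fin m} (hij : i ≠ j) :
    Ideal.Quotient.mk (csIdeal m n) (X i) * Ideal.Quotient.mk (csIdeal m n) (X j) = 0 := by
  rw [← map_mul, Ideal.Quotient.eq_zero_iff_mem]
  exact Ideal.subset_span (Or.inl (Or.inl ⟨i, j, hij, rfl⟩))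

theorem mk_X_pow (j : Fin m) : Ideal.Quotient.mk (csIdeal m n) (X j) ^ (2 * n + 1) = 0 := by
  rw [← map_pow, Ideal.Quotient.eq_zero_iff_mem]
  exact Ideal.subset_span (Or.inr ⟨j, rfl⟩)

end csIdeal

/-- In `H = ℤ[x_1,…,x_m]/R_{2n}` with `m = 2u+1`:
`∏_{r=1}^{u}(1-x_r)^{2n-1}(1+x_r)^2 · ∏_{s=u+1}^{m}(1-x_s)^{2n+1}
 = (1-(x_1+⋯+x_m))^{2n+1} · ∏_{r=1}^{u}((1+x_r)(1-x_r)^{-1})^2`,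
where `(1-x_r)^{-1} = Σ_{k=0}^{2n} x_r^k`. -/
theorem stmt_17 (n u : ℕ) (hn : 1 ≤ n)
    (x : Fin (2 * u + 1) → (MvPolynomial (Fin (2 * u + 1)) ℤ ⧸ csIdeal (2 * u + 1) n))
    (hx : ∀ j, x j = Ideal.Quotient.mk _ (X j)) :
    (∏ r ∈ Finset.univ.filter (fun i : Fin (2 * u + 1) => (i : ℕ) < u),
        (1 - x r) ^ (2 * n - 1) * (1 + x r) ^ 2) *
      (∏ s ∈ Finset.univ.filter (fun i : Fin (2 * u + 1) => ¬ (i : ℕ) < u),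
        (1 - x s) ^ (2 * n + 1))
    = (1 - ∑ j, x j) ^ (2 * n + 1) *
      ∏ r ∈ Finset.univ.filter (fun i : Fin (2 * u + 1) => (i : ℕ) < u),
        ((1 + x r) * ∑ k ∈ Finset.range (2 * n + 1), x r ^ k) ^ 2 := by
  have hmul : ((univ : Finset (Fin (2 * u + 1))) : Set _).Pairwise fun i j => x i * x j = 0 :=
    fun i _ j _ hij => show x i * x j = 0 by rw [hx, hx]; exact csIdeal.mk_X_mul_mk_X n hij
  have hinv (r : Fin (2 * u + 1)) : (1 - x r) * ∑ k ∈ range (2 * n + 1), x r ^ k = 1 :=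
    one_sub_mul_geom_sum_of_pow_eq_zero (by rw [hx]; exact csIdeal.mk_X_pow n r)
  have hexp : 2 * n + 1 = (2 * n - 1) + 2 := by omega
  rw [← prod_one_sub_of_pairwise_mul_eq_zero hmul, ← prod_pow,
    ← prod_filter_mul_prod_filter_not univ (fun i : Fin (2 * u + 1) => (i : ℕ) < u),
    mul_right_comm, ← prod_mul_distrib]
  congr 1
  refine prod_congr rfl fun r _ => ?_
  rw [← one_sub_pow_add_two_mul_sq_of_mul_eq_one (hinv r), ← hexp]
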